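/- arXiv:1808.04473 — 4 statements merged into one kernel-verified Lean document; each statement's English description precedes it below -/
import Mathlib

section
/- Let Ψ(σ²) = σ² (ZF equalization). Suppose the antennas are partitioned into C clusters with fractions w_c satisfying w_c > β for all c and Σ_c w_c = 1. Then the per-cluster fixed-point solution is σ_c² = N₀/(w_c − β), and the fused variance σ_FD² = (Σ_c 1/σ_c²)^{-1} equals N₀/(1 − Cβ); equivalently the post-fusion SINR is (Es/N₀)(1 − Cβ), independent of the particular choice of the w_c. -/
open Finset

theorem mul_div_sub_eq_add_mul_div {K : Type*} [Field K] {a β : K} (h : a ≠ β) (N0 : K) :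
    a * (N0 / (a - β)) = N0 + β * (N0 / (a - β)) := by
  have hsub : a - β ≠ 0 := sub_ne_zero.mpr h
  field_simp
  ring

theorem sum_one_div_div_sub {ι K : Type*} [Fintype ι] [Field K] (N0 β : K) {w : ι → K}
    (hw : ∑ c, w c = 1) :
    ∑ c, 1 / (N0 / (w c - β)) = (1 - Fintype.card ι * β) / N0 := by
  simp only [one_div_div]
  rw [← sum_div, sum_sub_distrib, hw, sum_const, card_univ, nsmul_eq_mul]

theorem zf_fused_sinr_general (C : ℕ) (N0 Es β : ℝ) (w : Fin C → ℝ) (hw : ∀ c, β < w c)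
    (hwsum : ∑ c, w c = 1) :
    (∀ c, w c * (N0 / (w c - β)) = N0 + β * (N0 / (w c - β))) ∧
    (∑ c, 1 / (N0 / (w c - β)))⁻¹ = N0 / (1 - C * β) ∧
    Es / (∑ c, 1 / (N0 / (w c - β)))⁻¹ = Es / N0 * (1 - C * β) := by
  have hfused : (∑ c, 1 / (N0 / (w c - β)))⁻¹ = N0 / (1 - C * β) := by
    rw [sum_one_div_div_sub N0 β hwsum, Fintype.card_fin, inv_div]
  refine ⟨fun c => mul_div_sub_eq_add_mul_div (hw c).ne' N0, hfused, ?_⟩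
  rw [hfused, div_div_eq_mul_div, mul_div_right_comm]

/-- ZF equalization with the FD architecture: the per-cluster fixed-point solution is
`σ_c² = N₀/(w_c − β)`, the fused variance equals `N₀/(1 − Cβ)`, and the post-fusion SINR
is `(Es/N₀)(1 − Cβ)`, independent of the particular partition `w`. -/
theorem zf_fused_sinr (C : ℕ) (hC : 1 ≤ C) (N0 Es β : ℝ) (hN0 : 0 < N0) (hEs : 0 < Es)
    (hβ : 0 < β) (hCβ : (C : ℝ) * β < 1) (w : Fin C → ℝ) (hw : ∀ c, β < w c)
    (hwsum : ∑ c, w c = 1) :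
    (∀ c, w c * (N0 / (w c - β)) = N0 + β * (N0 / (w c - β))) ∧
    (∑ c, 1 / (N0 / (w c - β)))⁻¹ = N0 / (1 - C * β) ∧
    Es / (∑ c, 1 / (N0 / (w c - β)))⁻¹ = Es / N0 * (1 - C * β) :=
  zf_fused_sinr_general C N0 Es β w hw hwsum
end

section
/- For the centralized/PD L-MMSE equalizer, the decoupled noise variance σ² > 0 solving the fixed-point equation σ² = N₀ + β·(Es σ²)/(Es + σ²) yields the post-equalization SINR Es/σ² = (1/2)·( sqrt( (1 − (Es/N₀)(1−β))² + 4 Es/N₀ ) − (1 − (Es/N₀)(1−β)) ). -/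
/-!
Clearing denominators in the fixed-point equation shows that the SINR `s = Es / σ²` is a root of
`s² + (1 - (Es / N₀)(1 - β)) s - Es / N₀`. Its constant term is negative, so this quadratic has a
single positive root, the one the quadratic formula gives with the `+` sign.
-/

theorem eq_half_mul_sqrt_sub_of_sq_add_mul_eq {x b c : ℝ} (hx : 0 < x) (hc : 0 ≤ c)
    (h : x ^ 2 + b * x = c) : x = 1 / 2 * (√(b ^ 2 + 4 * c) - b) := by
  have hxb : 0 ≤ x + b := nonneg_of_mul_nonneg_right
    ((show x * (x + b) = c by linear_combination h) ▸ hc) hx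
  have hsqrt : √(b ^ 2 + 4 * c) = 2 * x + b := by
    rw [← h, show b ^ 2 + 4 * (x ^ 2 + b * x) = (2 * x + b) ^ 2 by ring]
    exact Real.sqrt_sq (by linarith)
  rw [hsqrt]
  ring

theorem sinr_sq_add_mul_eq_of_fixed_point {N0 Es β σ2 : ℝ} (hN0 : N0 ≠ 0) (hσ : σ2 ≠ 0)
    (hEσ : Es + σ2 ≠ 0) (hfix : σ2 = N0 + β * (Es * σ2) / (Es + σ2)) :
    (Es / σ2) ^ 2 + (1 - Es / N0 * (1 - β)) * (Es / σ2) = Es / N0 := by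
  field_simp at hfix
  field_simp
  linear_combination (-Es) * hfix

theorem lmmse_sinr_closed_form_general (N0 Es β σ2 : ℝ) (hN0 : 0 < N0) (hEs : 0 < Es)
    (hσ : 0 < σ2) (hfix : σ2 = N0 + β * (Es * σ2) / (Es + σ2)) :
    Es / σ2 =
      (1 / 2) * (Real.sqrt ((1 - Es / N0 * (1 - β)) ^ 2 + 4 * (Es / N0))
        - (1 - Es / N0 * (1 - β))) :=
  eq_half_mul_sqrt_sub_of_sq_add_mul_eq (div_pos hEs hσ) (div_pos hEs hN0).le
    (sinr_sq_add_mul_eq_of_fixed_point hN0.ne' hσ.ne' (by positivity) hfix)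

/-- Closed-form post-equalization SINR of the centralized/PD L-MMSE equalizer from the
Tse–Hanly fixed-point equation `σ² = N₀ + β Es σ²/(Es + σ²)`. -/
theorem lmmse_sinr_closed_form (N0 Es β σ2 : ℝ) (hN0 : 0 < N0) (hEs : 0 < Es)
    (hβ : 0 < β) (hσ : 0 < σ2) (hfix : σ2 = N0 + β * (Es * σ2) / (Es + σ2)) :
    Es / σ2 =
      (1 / 2) * (Real.sqrt ((1 - Es / N0 * (1 - β)) ^ 2 + 4 * (Es / N0))
        - (1 - Es / N0 * (1 - β))) :=
  lmmse_sinr_closed_form_general N0 Es β σ2 hN0 hEs hσ hfix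
end

section
/- Let α = Es/N₀ > 0, β ≥ 0, C ≥ 2. With SINR_FD(w) defined as in the L-MMSE post-fusion formula over the simplex {w ≥ 0 : Σ_c w_c = 1}, the maximum is attained at a vertex w = e_j (one cluster gets all antennas), and max_w SINR_FD(w) = (1/2)( sqrt((1 − α(1−β))² + 4α) − (1 − α(1−β)) ), which equals the centralized L-MMSE SINR. -/
/-!
Completing the square, `(1 - α (w - β))² + 4 α w = (α w + 1 - α β)² + 4 α β`, so each summand of
`SINR_FD` is the Euclidean norm of a point moving affinely in `w`, hence convex in `w`. A convex
function on `[0, 1]` lies below its chord, and summing the chord bound over the simplex gives a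
value that only depends on the function's values at `0` and `1`; the same value is attained at every vertex.
-/

open Complex in
theorem convexOn_sqrt_sq_add_sq (a b c : ℝ) :
    ConvexOn ℝ Set.univ (fun x : ℝ => √((a * x + b) ^ 2 + c ^ 2)) := by
  refine ((convexOn_norm convex_univ).comp_affineMap
    (AffineMap.lineMap (k := ℝ) ((b : ℂ) + c * I) ((a + b : ℝ) + c * I))).congr fun x _ => ?_
  have hline : AffineMap.lineMap (k := ℝ) ((b : ℂ) + c * I) ((a + b : ℝ) + c * I) x
      = ((a * x + b : ℝ) : ℂ) + c * I := by
    rw [AffineMap.lineMap_apply_module']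
    apply Complex.ext
    · simp; ring
    · simp
  simp only [Function.comp_apply, hline, norm_add_mul_I]

section Simplex

variable {ι : Type*} [Fintype ι] {g : ℝ → ℝ}

theorem ConvexOn.sum_le_of_mem_stdSimplex (hg : ConvexOn ℝ (Set.Icc 0 1) g) {w : ι → ℝ}
    (hw : w ∈ stdSimplex ℝ ι) :
    ∑ i, g (w i) ≤ Fintype.card ι * g 0 + (g 1 - g 0) := by
  have hchord : ∀ i, g (w i) ≤ (1 - w i) * g 0 + w i * g 1 := fun i => by
    have hwi := mem_Icc_of_mem_stdSimplex hw i
    simpa using hg.2 (Set.left_mem_Icc.2 zero_le_one) (Set.right_mem_Icc.2 zero_le_one)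
      (sub_nonneg.2 hwi.2) hwi.1 (sub_add_cancel 1 (w i))
  calc ∑ i, g (w i) ≤ ∑ i, ((1 - w i) * g 0 + w i * g 1) := Finset.sum_le_sum fun i _ => hchord i
    _ = Fintype.card ι * g 0 + (g 1 - g 0) := by
      simp only [sub_mul, one_mul, Finset.sum_add_distrib, Finset.sum_sub_distrib,
        ← Finset.sum_mul, hw.2, Finset.sum_const, Finset.card_univ, nsmul_eq_mul]
      ring

theorem sum_apply_ite_eq [DecidableEq ι] (j : ι) :
    ∑ i, g (if i = j then 1 else 0) = Fintype.card ι * g 0 + (g 1 - g 0) := by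
  have hsplit : ∀ i, g (if i = j then 1 else 0) = g 0 + if i = j then g 1 - g 0 else 0 :=
    fun i => by split_ifs <;> ring
  simp only [hsplit, Finset.sum_add_distrib, Finset.sum_ite_eq', Finset.mem_univ, if_true,
    Finset.sum_const, Finset.card_univ, nsmul_eq_mul]

end Simplex

theorem lmmse_max_at_vertex_general (C : ℕ) (α β : ℝ) (hα : 0 < α) (hβ : 0 ≤ β) :
    (∀ w : Fin C → ℝ, (∀ c, 0 ≤ w c) → (∑ c, w c) = 1 →
      (1 / 2) * ∑ c, Real.sqrt ((1 - α * (w c - β)) ^ 2 + 4 * α * w c)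
          - (1 / 2) * (C - α * (1 - C * β))
        ≤ (1 / 2) * (Real.sqrt ((1 - α * (1 - β)) ^ 2 + 4 * α)
            - (1 - α * (1 - β)))) ∧
    (∀ j : Fin C,
      (1 / 2) * ∑ c, Real.sqrt
          ((1 - α * ((if c = j then (1 : ℝ) else 0) - β)) ^ 2
            + 4 * α * (if c = j then (1 : ℝ) else 0))
        - (1 / 2) * (C - α * (1 - C * β))
      = (1 / 2) * (Real.sqrt ((1 - α * (1 - β)) ^ 2 + 4 * α) - (1 - α * (1 - β)))) := by
  set g : ℝ → ℝ := fun w => √((1 - α * (w - β)) ^ 2 + 4 * α * w)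
  have hαβ : 0 ≤ α * β := mul_nonneg hα.le hβ
  have hg_convex : ConvexOn ℝ (Set.Icc 0 1) g := by
    refine ((convexOn_sqrt_sq_add_sq α (1 - α * β) (2 * √(α * β))).subset
      (Set.subset_univ _) (convex_Icc 0 1)).congr fun w _ => ?_
    simp only [g, mul_pow, Real.sq_sqrt hαβ]
    ring_nf
  have hg0 : g 0 = 1 + α * β := by
    simp only [g]
    rw [show (1 - α * (0 - β)) ^ 2 + 4 * α * 0 = (1 + α * β) ^ 2 by ring]
    exact Real.sqrt_sq (by linarith)
  have hg1 : g 1 = √((1 - α * (1 - β)) ^ 2 + 4 * α) := by simp only [g, mul_one]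
  refine ⟨fun w hw hsum => ?_, fun j => ?_⟩
  · have hsum_le := hg_convex.sum_le_of_mem_stdSimplex (w := w) ⟨hw, hsum⟩
    simp only [Fintype.card_fin, hg0, hg1] at hsum_le
    linarith
  · have hsum_vertex := sum_apply_ite_eq (g := g) j
    simp only [g, Fintype.card_fin, hg0, hg1] at hsum_vertex
    linarith

/-- The maximum of the L-MMSE post-fusion SINR over the simplex is attained at a vertex
(one cluster gets all antennas) and equals the centralized L-MMSE SINR. -/
theorem lmmse_max_at_vertex (C : ℕ) (hC : 2 ≤ C) (α β : ℝ) (hα : 0 < α) (hβ : 0 ≤ β) :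
    (∀ w : Fin C → ℝ, (∀ c, 0 ≤ w c) → (∑ c, w c) = 1 →
      (1 / 2) * ∑ c, Real.sqrt ((1 - α * (w c - β)) ^ 2 + 4 * α * w c)
          - (1 / 2) * (C - α * (1 - C * β))
        ≤ (1 / 2) * (Real.sqrt ((1 - α * (1 - β)) ^ 2 + 4 * α)
            - (1 - α * (1 - β)))) ∧
    (∀ j : Fin C,
      (1 / 2) * ∑ c, Real.sqrt
          ((1 - α * ((if c = j then (1 : ℝ) else 0) - β)) ^ 2
            + 4 * α * (if c = j then (1 : ℝ) else 0))
        - (1 / 2) * (C - α * (1 - C * β))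
      = (1 / 2) * (Real.sqrt ((1 - α * (1 - β)) ^ 2 + 4 * α) - (1 - α * (1 - β)))) :=
  lmmse_max_at_vertex_general C α β hα hβ
end

section
/- For any α > 0 and 0 ≤ β < 1, the L-MMSE SINR (1/2)( sqrt((1 − α(1−β))² + 4α) − (1 − α(1−β)) ) is at least the ZF SINR α(1−β) and at least the MRC SINR α/(1+αβ). -/
/-!
The L-MMSE SINR is the positive root of `x ^ 2 + (1 - α (1 - β)) x = α`. Completing the
square, every real `x` with `x ^ 2 + b x ≤ c` lies below that root, and both the ZF and the MRC
SINR satisfy this inequality: for `x = α (1 - β)` the left side is `x ≤ α`, and for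
`x = α / (1 + α β)` it is `α - x (α - x) ≤ α`.
-/

theorem le_half_sqrt_sub_of_sq_add_mul_le {b c x : ℝ} (h : x ^ 2 + b * x ≤ c) :
    x ≤ (1 / 2) * (Real.sqrt (b ^ 2 + 4 * c) - b) := by
  have hsq : (2 * x + b) ^ 2 ≤ b ^ 2 + 4 * c := by nlinarith
  have := (le_abs_self _).trans (Real.abs_le_sqrt hsq)
  linarith

section SINR

variable {α β : ℝ}

theorem zf_sinr_le_lmmse_sinr (hα : 0 ≤ α) (hβ : 0 ≤ β) :
    α * (1 - β)
      ≤ (1 / 2) * (Real.sqrt ((1 - α * (1 - β)) ^ 2 + 4 * α) - (1 - α * (1 - β))) := by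
  apply le_half_sqrt_sub_of_sq_add_mul_le
  nlinarith [mul_nonneg hα hβ]

theorem mrc_sinr_le_lmmse_sinr (hα : 0 ≤ α) (hβ : 0 ≤ β) :
    α / (1 + α * β)
      ≤ (1 / 2) * (Real.sqrt ((1 - α * (1 - β)) ^ 2 + 4 * α) - (1 - α * (1 - β))) := by
  apply le_half_sqrt_sub_of_sq_add_mul_le
  set x := α / (1 + α * β)
  have hden : 1 ≤ 1 + α * β := le_add_of_nonneg_right (mul_nonneg hα hβ)
  have hx : x * (1 + α * β) = α := div_mul_cancel₀ _ (by linarith)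
  have hx0 : 0 ≤ x := by positivity
  have hxα : x ≤ α := div_le_self hα hden
  calc x ^ 2 + (1 - α * (1 - β)) * x = α - x * (α - x) := by linear_combination hx
    _ ≤ α := sub_le_self _ (mul_nonneg hx0 (sub_nonneg.mpr hxα))

end SINR

theorem lmmse_dominates_general (α β : ℝ) (hα : 0 < α) (hβ0 : 0 ≤ β) :
    α * (1 - β)
      ≤ (1 / 2) * (Real.sqrt ((1 - α * (1 - β)) ^ 2 + 4 * α) - (1 - α * (1 - β))) ∧
    α / (1 + α * β)
      ≤ (1 / 2) * (Real.sqrt ((1 - α * (1 - β)) ^ 2 + 4 * α) - (1 - α * (1 - β))) :=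
  ⟨zf_sinr_le_lmmse_sinr hα.le hβ0, mrc_sinr_le_lmmse_sinr hα.le hβ0⟩

/-- The L-MMSE SINR dominates both the ZF SINR `α(1−β)` and the MRC SINR `α/(1+αβ)`. -/
theorem lmmse_dominates (α β : ℝ) (hα : 0 < α) (hβ0 : 0 ≤ β) (hβ1 : β < 1) :
    α * (1 - β)
      ≤ (1 / 2) * (Real.sqrt ((1 - α * (1 - β)) ^ 2 + 4 * α) - (1 - α * (1 - β))) ∧
    α / (1 + α * β)
      ≤ (1 / 2) * (Real.sqrt ((1 - α * (1 - β)) ^ 2 + 4 * α) - (1 - α * (1 - β))) :=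
  lmmse_dominates_general α β hα hβ0
end
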